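/- Let X be a Banach space, p ∈ [1, ∞), Λ an index set, and {T_λ : λ ∈ Λ} ⊆ B(X). Suppose there exist ν₀ ∈ ℕ, C₀ ≥ 0 and ρ ∈ (0, 1) such that for every ν ≥ ν₀ the family {T_λ^ν : λ ∈ Λ} is R-bounded with R_p-bound at most ρ^ν, and Σ_{ν=0}^{ν₀−1} R_p({T_λ^ν : λ ∈ Λ}) ≤ C₀. Then for every λ ∈ Λ the operator I − T_λ is invertible in B(X), and the family {(I − T_λ)^{−1} : λ ∈ Λ} is R-bounded with R_p-bound at most C₀ + 1/(1 − ρ). -/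

import Mathlib

open scoped BigOperators

noncomputable section

/-- The discrete Rademacher average `(2^{-N} ∑_{ε ∈ {−1,1}^N} ‖∑_ν ε_ν v_ν‖^p)^{1/p}`. -/
def radAvg {Y : Type*} [NormedAddCommGroup Y] (p : ℝ) {N : ℕ} (v : Fin N → Y) : ℝ :=
  (((2 : ℝ) ^ N)⁻¹ * ∑ ε : Fin N → Bool, ‖∑ ν, (if ε ν then v ν else -v ν)‖ ^ p) ^ p⁻¹

/-- A family `T` of bounded operators is R-bounded with `R_p`-bound at most `C`. -/
def IsRBoundedWith {X Y : Type*} [NormedAddCommGroup X] [NormedSpace ℂ X]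
    [NormedAddCommGroup Y] [NormedSpace ℂ Y]
    (p : ℝ) (T : Set (X →L[ℂ] Y)) (C : ℝ) : Prop :=
  ∀ (N : ℕ) (t : Fin N → X →L[ℂ] Y), (∀ ν, t ν ∈ T) → ∀ x : Fin N → X,
    radAvg p (fun ν => t ν (x ν)) ≤ C * radAvg p x

/-- A family of bounded operators is R-bounded. -/
def IsRBounded {X Y : Type*} [NormedAddCommGroup X] [NormedSpace ℂ X]
    [NormedAddCommGroup Y] [NormedSpace ℂ Y] (p : ℝ) (T : Set (X →L[ℂ] Y)) : Prop :=
  ∃ C, 0 ≤ C ∧ IsRBoundedWith p T C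

/-- The `R_p`-bound of a family of bounded operators. -/
def rBound {X Y : Type*} [NormedAddCommGroup X] [NormedSpace ℂ X]
    [NormedAddCommGroup Y] [NormedSpace ℂ Y] (p : ℝ) (T : Set (X →L[ℂ] Y)) : ℝ :=
  sInf {C | 0 ≤ C ∧ IsRBoundedWith p T C}

section auxLemmas

variable {Y : Type*} [NormedAddCommGroup Y] {p : ℝ} {N : ℕ}

lemma radAvg_nonneg (p : ℝ) (v : Fin N → Y) : 0 ≤ radAvg p v := by
  apply Real.rpow_nonneg
  positivity

lemma radAvg_zero (hp : 1 ≤ p) : radAvg p (fun _ : Fin N => (0 : Y)) = 0 := by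
  have hp0 : p ≠ 0 := by positivity
  have : ∀ ε : Fin N → Bool, ‖∑ ν : Fin N, (if ε ν then (0:Y) else -(0:Y))‖ ^ p = 0 := by
    intro ε
    simp [Real.zero_rpow hp0]
  simp only [radAvg]
  rw [Finset.sum_congr rfl (fun ε _ => this ε)]
  simp [Real.zero_rpow (by simpa using hp0 : p⁻¹ ≠ 0)]

lemma radAvg_single (hp : 1 ≤ p) (v : Fin 1 → Y) : radAvg p v = ‖v 0‖ := by
  have hp0 : p ≠ 0 := by positivity
  have h1 : ∑ ε : Fin 1 → Bool, ‖∑ ν : Fin 1, (if ε ν then v ν else -v ν)‖ ^ p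
      = 2 * ‖v 0‖ ^ p := by
    rw [Fintype.sum_equiv (Equiv.funUnique (Fin 1) Bool)
      _ (fun b => ‖(if b then v 0 else -v 0)‖ ^ p) (by intro ε; simp)]
    simp [two_mul]
  rw [radAvg, h1]
  rw [pow_one]
  rw [inv_mul_cancel_left₀ (by norm_num)]
  exact Real.rpow_rpow_inv (norm_nonneg _) hp0

lemma radAvg_add_le (hp : 1 ≤ p) (u v : Fin N → Y) :
    radAvg p (fun ν => u ν + v ν) ≤ radAvg p u + radAvg p v := by
  have hp0 : 0 < p := lt_of_lt_of_le zero_lt_one hp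
  have hc : (0:ℝ) ≤ ((2:ℝ) ^ N)⁻¹ := by positivity
  set f : (Fin N → Bool) → ℝ := fun ε => ‖∑ ν, (if ε ν then u ν else -u ν)‖
  set g : (Fin N → Bool) → ℝ := fun ε => ‖∑ ν, (if ε ν then v ν else -v ν)‖
  have key : ∀ ε : Fin N → Bool,
      ‖∑ ν, (if ε ν then u ν + v ν else -(u ν + v ν))‖ ≤ f ε + g ε := by
    intro ε
    have : (∑ ν, (if ε ν then u ν + v ν else -(u ν + v ν)))
        = (∑ ν, (if ε ν then u ν else -u ν)) + ∑ ν, (if ε ν then v ν else -v ν) := by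
      rw [← Finset.sum_add_distrib]
      congr 1; funext ν
      by_cases h : ε ν <;> simp [h, neg_add, add_comm]
    rw [this]
    exact norm_add_le _ _
  have step1 : radAvg p (fun ν => u ν + v ν)
      ≤ (((2:ℝ) ^ N)⁻¹ * ∑ ε : Fin N → Bool, (f ε + g ε) ^ p) ^ p⁻¹ := by
    apply Real.rpow_le_rpow (by positivity)
    · apply mul_le_mul_of_nonneg_left _ hc
      apply Finset.sum_le_sum
      intro ε _
      exact Real.rpow_le_rpow (norm_nonneg _) (key ε) hp0.le
    · positivity
  refine step1.trans ?_
  have mink := Real.Lp_add_le Finset.univ f g hp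
  have habs : ∀ ε : Fin N → Bool, |f ε + g ε| = f ε + g ε := fun ε =>
    abs_of_nonneg (by positivity)
  have habsf : ∀ ε : Fin N → Bool, |f ε| = f ε := fun ε => abs_of_nonneg (norm_nonneg _)
  have habsg : ∀ ε : Fin N → Bool, |g ε| = g ε := fun ε => abs_of_nonneg (norm_nonneg _)
  simp only [habs, habsf, habsg, one_div] at mink
  calc (((2:ℝ) ^ N)⁻¹ * ∑ ε : Fin N → Bool, (f ε + g ε) ^ p) ^ p⁻¹
      = (((2:ℝ) ^ N)⁻¹) ^ p⁻¹ * (∑ ε : Fin N → Bool, (f ε + g ε) ^ p) ^ p⁻¹ := by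
        rw [Real.mul_rpow hc (by positivity)]
    _ ≤ (((2:ℝ) ^ N)⁻¹) ^ p⁻¹ *
        ((∑ ε : Fin N → Bool, f ε ^ p) ^ p⁻¹ + (∑ ε : Fin N → Bool, g ε ^ p) ^ p⁻¹) := by
        apply mul_le_mul_of_nonneg_left mink (by positivity)
    _ = radAvg p u + radAvg p v := by
        rw [mul_add, radAvg, radAvg,
          Real.mul_rpow hc (by positivity), Real.mul_rpow hc (by positivity)]

lemma radAvg_continuous (hp : 1 ≤ p) : Continuous fun v : Fin N → Y => radAvg p v := by
  have hpp : (0:ℝ) ≤ p := by linarith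
  apply Continuous.rpow_const
  · apply Continuous.mul continuous_const
    apply continuous_finset_sum
    intro ε _
    apply Continuous.rpow_const
    · apply Continuous.norm
      apply continuous_finset_sum
      intro ν _
      by_cases h : ε ν
      · simpa [h] using continuous_apply (A := fun _ : Fin N => Y) ν
      · exact (continuous_apply (A := fun _ : Fin N => Y) ν).neg.congr (fun v => by simp [h])
    · intro v; exact Or.inr hpp
  · intro v; exact Or.inr (by positivity)

end auxLemmas

section opLemmas

variable {X Y : Type*} [NormedAddCommGroup X] [NormedSpace ℂ X]
  [NormedAddCommGroup Y] [NormedSpace ℂ Y] {p : ℝ}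

lemma isRBoundedWith_rBound {T : Set (X →L[ℂ] Y)} (h : IsRBounded p T) :
    IsRBoundedWith p T (rBound p T) := by
  obtain ⟨C, hC0, hC⟩ := h
  intro N t ht x
  have hne : {C | 0 ≤ C ∧ IsRBoundedWith p T C}.Nonempty := ⟨C, hC0, hC⟩
  rcases eq_or_lt_of_le (radAvg_nonneg p x) with h0 | h0
  · have h1 := hC N t ht x
    rw [← h0, mul_zero] at h1 ⊢
    exact h1
  · rw [rBound, ← div_le_iff₀ h0]
    apply le_csInf hne
    intro c hc
    rw [div_le_iff₀ h0]
    exact hc.2 N t ht x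

lemma norm_le_of_isRBoundedWith (hp : 1 ≤ p) {T : Set (X →L[ℂ] Y)} {C : ℝ}
    (hC : 0 ≤ C) (h : IsRBoundedWith p T C) {A : X →L[ℂ] Y} (hA : A ∈ T) : ‖A‖ ≤ C := by
  apply ContinuousLinearMap.opNorm_le_bound A hC
  intro x
  have := h 1 (fun _ => A) (fun _ => hA) (fun _ => x)
  simpa [radAvg_single hp] using this

end opLemmas

/-- If the powers `{T_λ^ν : λ ∈ Λ}` are R-bounded with `R_p`-bound at most
`ρ^ν` for `ν ≥ ν₀` and the `R_p`-bounds for `ν < ν₀` sum up to at most `C₀`, then each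
`I − T_λ` is invertible and the family of inverses is R-bounded with `R_p`-bound at most
`C₀ + 1/(1−ρ)`. -/
theorem stmt2 {X : Type*} [NormedAddCommGroup X] [NormedSpace ℂ X] [CompleteSpace X]
    (p : ℝ) (hp : 1 ≤ p) {Λ : Type*} (T : Λ → X →L[ℂ] X)
    (ν₀ : ℕ) (C₀ ρ : ℝ) (hC₀ : 0 ≤ C₀) (hρ : ρ ∈ Set.Ioo (0 : ℝ) 1)
    (hhi : ∀ ν, ν₀ ≤ ν → IsRBoundedWith p (Set.range fun l => T l ^ ν) (ρ ^ ν))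
    (hlo : ∀ ν < ν₀, IsRBounded p (Set.range fun l => T l ^ ν))
    (hsum : ∑ ν ∈ Finset.range ν₀, rBound p (Set.range fun l => T l ^ ν) ≤ C₀) :
    (∀ l : Λ, IsUnit (1 - T l)) ∧
      IsRBoundedWith p {S | ∃ l : Λ, S = Ring.inverse (1 - T l)} (C₀ + 1 / (1 - ρ)) := by
  obtain ⟨hρ0, hρ1⟩ := hρ
  have hgeom : Summable fun n : ℕ => ρ ^ n := summable_geometric_of_lt_one hρ0.le hρ1
  set B : ℕ → ℝ := fun n => if n < ν₀ then rBound p (Set.range fun l => T l ^ n) else ρ ^ n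
    with hBdef
  have hBnn : ∀ n, 0 ≤ B n := by
    intro n
    simp only [hBdef]
    split
    · exact Real.sInf_nonneg (fun c hc => hc.1)
    · positivity
  have hBbound : ∀ n, IsRBoundedWith p (Set.range fun l => T l ^ n) (B n) := by
    intro n
    simp only [hBdef]
    split
    · next h => exact isRBoundedWith_rBound (hlo n h)
    · next h => exact hhi n (le_of_not_gt h)
  -- uniform bound on the partial sums of B
  have hBsum : ∀ K, ∑ k ∈ Finset.range K, B k ≤ C₀ + 1 / (1 - ρ) := by
    intro K
    set M := max K ν₀ with hM
    have h1 : ∑ k ∈ Finset.range K, B k ≤ ∑ k ∈ Finset.range M, B k := by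
      apply Finset.sum_le_sum_of_subset_of_nonneg
      · exact Finset.range_subset_range.2 (le_max_left _ _)
      · intro k _ _; exact hBnn k
    refine h1.trans ?_
    have hsplit : ∑ k ∈ Finset.range ν₀, B k + ∑ k ∈ Finset.Ico ν₀ M, B k
        = ∑ k ∈ Finset.range M, B k := by
      rw [Finset.range_eq_Ico, Finset.range_eq_Ico]
      exact Finset.sum_Ico_consecutive _ (Nat.zero_le _) (le_max_right _ _)
    rw [← hsplit]
    have hlo' : ∑ k ∈ Finset.range ν₀, B k ≤ C₀ := by
      refine le_trans (le_of_eq (Finset.sum_congr rfl ?_)) hsum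
      intro k hk
      simp only [hBdef, if_pos (Finset.mem_range.mp hk)]
    have hhi' : ∑ k ∈ Finset.Ico ν₀ M, B k ≤ 1 / (1 - ρ) := by
      have heq : ∑ k ∈ Finset.Ico ν₀ M, B k = ∑ k ∈ Finset.Ico ν₀ M, ρ ^ k := by
        apply Finset.sum_congr rfl
        intro k hk
        simp only [hBdef, if_neg (not_lt.mpr (Finset.mem_Ico.mp hk).1)]
      rw [heq, one_div, ← tsum_geometric_of_lt_one hρ0.le hρ1]
      exact hgeom.sum_le_tsum _ (fun k _ => by positivity)
    exact add_le_add hlo' hhi'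
  -- operator norm bounds and summability of the geometric series of operators
  have hOp : ∀ (l : Λ) (n : ℕ), ‖T l ^ n‖ ≤ B n := fun l n =>
    norm_le_of_isRBoundedWith hp (hBnn n) (hBbound n) ⟨l, rfl⟩
  have hBsummable : Summable B := by
    rw [← summable_nat_add_iff ν₀]
    have : (fun n => B (n + ν₀)) = fun n => ρ ^ n * ρ ^ ν₀ := by
      funext n
      simp only [hBdef, if_neg (not_lt.mpr (Nat.le_add_left _ _)), pow_add]
    rw [this]
    exact hgeom.mul_right _
  have hSummable : ∀ l, Summable fun n : ℕ => T l ^ n := fun l =>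
    Summable.of_norm_bounded hBsummable (hOp l)
  set S : Λ → X →L[ℂ] X := fun l => ∑' n : ℕ, T l ^ n with hSdef
  have hstail : ∀ l, ∑' n : ℕ, T l ^ (n + 1) = S l - 1 := by
    intro l
    have h0 := Summable.tsum_eq_zero_add (hSummable l)
    simp only [pow_zero] at h0
    rw [hSdef]
    simp only
    rw [h0]
    abel
  have hmul : ∀ l, (1 - T l) * S l = 1 := by
    intro l
    have hTS : T l * S l = S l - 1 := by
      rw [hSdef]
      simp only
      rw [← Summable.tsum_mul_left (T l) (hSummable l)]
      rw [← hstail l]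
      exact tsum_congr fun n => (pow_succ' (T l) n).symm
    rw [sub_mul, one_mul, hTS]
    abel
  have hmul' : ∀ l, S l * (1 - T l) = 1 := by
    intro l
    have hST : S l * T l = S l - 1 := by
      rw [hSdef]
      simp only
      rw [← Summable.tsum_mul_right (T l) (hSummable l)]
      rw [← hstail l]
      exact tsum_congr fun n => (pow_succ (T l) n).symm
    rw [mul_sub, mul_one, hST]
    abel
  set u : Λ → (X →L[ℂ] X)ˣ := fun l => ⟨1 - T l, S l, hmul l, hmul' l⟩ with hudef
  have hUnit : ∀ l, IsUnit (1 - T l) := fun l => ⟨u l, rfl⟩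
  have hinv : ∀ l, Ring.inverse (1 - T l) = S l := by
    intro l
    have : (1 - T l) = (u l : X →L[ℂ] X) := rfl
    rw [this, Ring.inverse_unit]
    rfl
  refine ⟨hUnit, ?_⟩
  intro N t ht x
  choose l hl using ht
  -- partial sums
  set P : ℕ → Fin N → X := fun K ν => ∑ k ∈ Finset.range K, (T (l ν) ^ k) (x ν) with hPdef
  have htendP : Filter.Tendsto P Filter.atTop (nhds fun ν => t ν (x ν)) := by
    rw [tendsto_pi_nhds]
    intro ν
    have hsum2 : HasSum (fun k : ℕ => (T (l ν) ^ k) (x ν)) (S (l ν) (x ν)) :=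
      (ContinuousLinearMap.apply ℂ X (x ν)).hasSum (hSummable (l ν)).hasSum
    have : t ν (x ν) = S (l ν) (x ν) := by rw [hl ν, hinv]
    rw [this]
    exact hsum2.tendsto_sum_nat
  have htend : Filter.Tendsto (fun K => radAvg p (P K)) Filter.atTop
      (nhds (radAvg p fun ν => t ν (x ν))) :=
    ((radAvg_continuous hp).tendsto _).comp htendP
  have hInd : ∀ K, radAvg p (P K) ≤ (∑ k ∈ Finset.range K, B k) * radAvg p x := by
    intro K
    induction K with
    | zero =>
      simp only [hPdef, Finset.range_zero, Finset.sum_empty, Finset.sum_range_zero, zero_mul]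
      rw [radAvg_zero hp]
    | succ K ih =>
      have hsplit : P (K + 1) = fun ν => P K ν + (T (l ν) ^ K) (x ν) := by
        funext ν
        simp [hPdef, Finset.sum_range_succ]
      calc radAvg p (P (K + 1)) ≤ radAvg p (P K) + radAvg p (fun ν => (T (l ν) ^ K) (x ν)) := by
            rw [hsplit]; exact radAvg_add_le hp _ _
        _ ≤ (∑ k ∈ Finset.range K, B k) * radAvg p x + B K * radAvg p x :=
            add_le_add ih (hBbound K N (fun ν => T (l ν) ^ K) (fun ν => ⟨l ν, rfl⟩) x)
        _ = (∑ k ∈ Finset.range (K + 1), B k) * radAvg p x := by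
            rw [Finset.sum_range_succ, add_mul]
  have hPle : ∀ K, radAvg p (P K) ≤ (C₀ + 1 / (1 - ρ)) * radAvg p x := fun K =>
    (hInd K).trans (mul_le_mul_of_nonneg_right (hBsum K) (radAvg_nonneg p x))
  exact le_of_tendsto' htend hPle

end
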